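/- Fix d∈ℕ, reals 0<θ₁<…<θ_d<θ_{d+1}=1 and reals 0<u_j<v_j for j=1,…,d+1. Let N∈ℕ, N≥2, satisfy ⌊u_jN⌋ ≥ ⌈N^{3/4}⌉ for all j=1,…,d+1 and ⌊v_{d+1}N⌋ − ⌊u_jN⌋ + ⌈N^{3/4}⌉ ≤ N − ⌊θ_jN⌋ for all j=1,…,d. Let λ₁ be a Bernoulli path on {0,…,N} with λ₁(0)=0 and λ₁(⌊θ_jN⌋) ∈ [⌊u_jN⌋, ⌊v_jN⌋] for j=1,…,d+1, and let x,y∈ℤ be such that Ω(N,x,y,λ₁,−∞) is nonempty. Then P^{N,x,y,λ₁,−∞}( L(⌊θ_jN⌋) ≤ λ₁(⌊θ_jN⌋) − ⌈N^{3/4}⌉ for all j=1,…,d ) ≥ N^{−2d⌈N^{3/4}⌉}. -/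

import Mathlib

/-- A Bernoulli path on `{0,…,N}`: increments in `{0,1}`. -/
def IsBPath (N : ℕ) (L : Fin (N+1) → ℤ) : Prop :=
  ∀ j : Fin N, L j.succ = L j.castSucc ∨ L j.succ = L j.castSucc + 1

/-- `Ω(N,x,y,f,g)`: Bernoulli paths from `x` to `y` staying below the barrier `f`
and above the barrier `g`. -/
def pathSetB (N : ℕ) (x y : ℤ) (f : Fin (N+1) → WithTop ℤ) (g : Fin (N+1) → WithBot ℤ) :
    Set (Fin (N+1) → ℤ) :=
  {L | IsBPath N L ∧ L 0 = x ∧ L (Fin.last N) = y ∧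
    (∀ j, (L j : WithTop ℤ) ≤ f j) ∧ (∀ j, g j ≤ (L j : WithBot ℤ))}

/-- Probability of the event `A` under the uniform measure on the finite set `Ω`. -/
noncomputable def unifProb {X : Type*} (Ω A : Set X) : ℝ :=
  ((Ω ∩ A).ncard : ℝ) / (Ω.ncard : ℝ)

/-- The element of `Fin (N+1)` with value `k` (clamped at `N`; in all uses `k ≤ N`). -/
def idxN (N k : ℕ) : Fin (N+1) := ⟨min k N, by omega⟩

/-!
Call a set `S` of Bernoulli paths lower closed if it contains every Bernoulli path with the same
endpoints lying below one of its members; `Ω(N,x,y,λ₁,−∞)` is such a set. If every path of `S`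
has `L(m) ≤ c + 1`, while `L(0) ≤ c` and `L(N) ≤ c + N − m`, then a path with `L(m) = c + 1`
has an up-step at some `p < m` and a flat step at some `q ≥ m`; lowering it by one on `(p, q]`
gives a path of `S` with `L(m) = c`, and the path is recovered from the lowered one and `(p, q)`.
Hence lowering the constraint at `m` by one costs a factor at most `m (N − m) + 1 ≤ N²`.
Lowering each of the `d` constraints `⌈N^{3/4}⌉` times gives the bound.
-/

theorem exists_lt_succ_of_lt {f : ℕ → ℤ} {a b : ℕ} (hab : a ≤ b) (h : f a < f b) :
    ∃ p, a ≤ p ∧ p < b ∧ f p < f (p + 1) := by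
  induction b, hab using Nat.le_induction with
  | base => exact absurd h (lt_irrefl _)
  | succ b hab ih =>
    by_cases hb : f b < f (b + 1)
    · exact ⟨b, hab, b.lt_succ_self, hb⟩
    · obtain ⟨p, hap, hpb, hp⟩ := ih (h.trans_le (not_lt.mp hb))
      exact ⟨p, hap, hpb.trans b.lt_succ_self, hp⟩

theorem idxN_val {N k : ℕ} (h : k ≤ N) : (idxN N k : ℕ) = k := min_eq_left h

theorem idxN_zero (N : ℕ) : idxN N 0 = 0 := Fin.ext (Nat.zero_min N)

theorem idxN_self (N : ℕ) : idxN N N = Fin.last N := Fin.ext (min_self N)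

theorem idxN_castSucc {N : ℕ} (j : Fin N) : idxN N j = j.castSucc :=
  Fin.ext (idxN_val j.is_lt.le)

theorem idxN_succ {N : ℕ} (j : Fin N) : idxN N (j + 1) = j.succ :=
  Fin.ext (idxN_val j.is_lt)

def iocIndicator (N p q : ℕ) : Fin (N+1) → ℤ :=
  fun i => if p < (i : ℕ) ∧ (i : ℕ) ≤ q then 1 else 0

namespace IsBPath

variable {N : ℕ} {L : Fin (N+1) → ℤ}

theorem monotone (hL : IsBPath N L) : Monotone L :=
  Fin.monotone_iff_le_succ.2 fun j => by rcases hL j with h | h <;> omega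

theorem antitone_sub_val (hL : IsBPath N L) : Antitone fun i : Fin (N+1) => L i - i :=
  Fin.antitone_iff_succ_le.2 fun j => by
    simp only [Fin.val_succ, Fin.val_castSucc]
    rcases hL j with h | h <;> omega

theorem sub_iocIndicator (hL : IsBPath N L) {p q : ℕ} (hp : L (idxN N p) < L (idxN N (p + 1)))
    (hq : L (idxN N (q + 1)) ≤ L (idxN N q)) : IsBPath N (L - iocIndicator N p q) := by
  intro j
  have hj := hL j
  simp only [Pi.sub_apply, iocIndicator, Fin.val_succ, Fin.val_castSucc]
  by_cases hjp : (j : ℕ) = p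
  · subst hjp
    rw [idxN_castSucc, idxN_succ] at hp
    split_ifs <;> omega
  by_cases hjq : (j : ℕ) = q
  · subst hjq
    rw [idxN_castSucc, idxN_succ] at hq
    split_ifs <;> omega
  split_ifs <;> omega

end IsBPath

theorem pathSetB_finite (N : ℕ) (x y : ℤ) (f : Fin (N+1) → WithTop ℤ)
    (g : Fin (N+1) → WithBot ℤ) : (pathSetB N x y f g).Finite := by
  refine (Set.finite_Icc (fun _ : Fin (N+1) => x) (fun _ => x + N)).subset ?_
  rintro L ⟨hL, hx, -, -, -⟩
  refine ⟨fun i => hx ▸ hL.monotone (Fin.zero_le i), fun i => ?_⟩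
  have h : L i - (i : ℕ) ≤ L 0 := by simpa using hL.antitone_sub_val (Fin.zero_le i)
  have hi : (i : ℤ) ≤ N := by exact_mod_cast Fin.is_le i
  show L i ≤ x + N
  omega

def IsLowerClosed (N : ℕ) (S : Set (Fin (N+1) → ℤ)) : Prop :=
  ∀ ⦃L⦄, L ∈ S → ∀ ⦃L'⦄, IsBPath N L' → L' 0 = L 0 → L' (Fin.last N) = L (Fin.last N) →
    L' ≤ L → L' ∈ S

namespace IsLowerClosed

variable {N : ℕ} {S : Set (Fin (N+1) → ℤ)}

theorem inter (hS : IsLowerClosed N S) {T : Set (Fin (N+1) → ℤ)} (hT : IsLowerSet T) :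
    IsLowerClosed N (S ∩ T) :=
  fun _ hL _ hB h0 hN hle => ⟨hS hL.1 hB h0 hN hle, hT hle hL.2⟩

theorem exists_sub_iocIndicator_mem (hS : IsLowerClosed N S) {L : Fin (N+1) → ℤ} (hL : L ∈ S)
    (hB : IsBPath N L) {m : ℕ} (hm : m ≤ N) (h0 : L 0 < L (idxN N m))
    (hlast : L (Fin.last N) < L (idxN N m) + (N - m)) :
    ∃ p < m, ∃ q, m ≤ q ∧ q < N ∧ L - iocIndicator N p q ∈ S := by
  obtain ⟨p, -, hpm, hp⟩ := exists_lt_succ_of_lt (f := fun k => L (idxN N k)) m.zero_le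
    (by rwa [idxN_zero])
  -- a flat step of `L` is an up-step of `k ↦ k - L k`
  obtain ⟨q, hmq, hqN, hq⟩ := exists_lt_succ_of_lt (f := fun k => (k : ℤ) - L (idxN N k)) hm
    (by rw [idxN_self]; omega)
  have hq' : L (idxN N (q + 1)) ≤ L (idxN N q) := by push_cast at hq; omega
  have hfixed : ∀ i : Fin (N+1), (i : ℕ) = 0 ∨ (i : ℕ) = N → iocIndicator N p q i = 0 :=
    fun i hi => if_neg (by omega)
  refine ⟨p, hpm, q, hmq, hqN, hS hL (hB.sub_iocIndicator hp hq') ?_ ?_ fun i => ?_⟩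
  · simp [hfixed 0 (Or.inl rfl)]
  · simp [hfixed (Fin.last N) (Or.inr rfl)]
  · simp only [Pi.sub_apply, iocIndicator]
    split_ifs <;> omega

end IsLowerClosed

theorem isLowerClosed_pathSetB (N : ℕ) (x y : ℤ) (f : Fin (N+1) → WithTop ℤ) :
    IsLowerClosed N (pathSetB N x y f fun _ => ⊥) := by
  rintro L ⟨-, hx, hy, hf, -⟩ L' hB h0 hN hle
  exact ⟨hB, h0.trans hx, hN.trans hy, fun i => (WithTop.coe_le_coe.2 (hle i)).trans (hf i),
    fun _ => bot_le⟩

section Counting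

variable {N : ℕ} {S : Set (Fin (N+1) → ℤ)}

theorem ncard_le_sq_mul_ncard_inter (hN : 0 < N) {m : ℕ} (hm : m ≤ N) (hS : S.Finite)
    (hclosed : IsLowerClosed N S) (hpath : ∀ L ∈ S, IsBPath N L) {c : ℤ}
    (h0 : ∀ L ∈ S, L 0 ≤ c) (hlast : ∀ L ∈ S, L (Fin.last N) ≤ c + (N - m))
    (hmc : ∀ L ∈ S, L (idxN N m) ≤ c + 1) :
    S.ncard ≤ N ^ 2 * (S ∩ {L | L (idxN N m) ≤ c}).ncard := by
  classical
  set T := S ∩ {L | L (idxN N m) ≤ c}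
  set P : Finset (ℕ × ℕ) := insert (0, 0) (Finset.range m ×ˢ Finset.Ico m N)
  set raise : (Fin (N+1) → ℤ) × (ℕ × ℕ) → Fin (N+1) → ℤ :=
    fun z => z.1 + iocIndicator N z.2.1 z.2.2
  have hcover : S ⊆ raise '' (T ×ˢ ↑P) := by
    intro L hL
    by_cases hLc : L (idxN N m) ≤ c
    · refine ⟨(L, (0, 0)), ⟨⟨hL, hLc⟩, Finset.mem_insert_self _ _⟩, ?_⟩
      ext i
      simp only [raise, iocIndicator, Pi.add_apply]
      rw [if_neg (by omega), add_zero]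
    have hLm : L (idxN N m) = c + 1 := le_antisymm (hmc L hL) (by omega)
    obtain ⟨p, hpm, q, hmq, hqN, hmem⟩ := hclosed.exists_sub_iocIndicator_mem hL (hpath L hL) hm
      (by linarith [h0 L hL]) (by linarith [hlast L hL])
    have hval : (L - iocIndicator N p q) (idxN N m) ≤ c := by
      simp only [Pi.sub_apply, iocIndicator, idxN_val hm]
      rw [if_pos ⟨hpm, hmq⟩]
      omega
    refine ⟨(L - iocIndicator N p q, (p, q)), ⟨⟨hmem, hval⟩, ?_⟩, sub_add_cancel _ _⟩
    exact Finset.mem_insert_of_mem (by simp [hpm, hmq, hqN])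
  have hP : P.card ≤ N ^ 2 :=
    calc P.card ≤ (Finset.range m ×ˢ Finset.Ico m N).card + 1 := Finset.card_insert_le _ _
      _ = m * (N - m) + 1 := by simp [Finset.card_product]
      _ ≤ N ^ 2 := by nlinarith [Nat.sub_le N m, Nat.sub_add_cancel hm]
  have hT : T.Finite := hS.inter_of_left _
  calc S.ncard ≤ (raise '' (T ×ˢ ↑P)).ncard :=
        Set.ncard_le_ncard hcover ((hT.prod P.finite_toSet).image _)
    _ ≤ (T ×ˢ (P : Set (ℕ × ℕ))).ncard := Set.ncard_image_le (hT.prod P.finite_toSet)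
    _ = T.ncard * P.card := by rw [Set.ncard_prod, Set.ncard_coe_finset]
    _ ≤ N ^ 2 * T.ncard := by rw [mul_comm]; exact Nat.mul_le_mul_right _ hP

theorem ncard_le_pow_mul_ncard_inter (hN : 0 < N) {m : ℕ} (hm : m ≤ N) (hS : S.Finite)
    (hclosed : IsLowerClosed N S) (hpath : ∀ L ∈ S, IsBPath N L) (k : ℕ) {c : ℤ}
    (h0 : ∀ L ∈ S, L 0 ≤ c) (hlast : ∀ L ∈ S, L (Fin.last N) ≤ c + (N - m))
    (hmc : ∀ L ∈ S, L (idxN N m) ≤ c + k) :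
    S.ncard ≤ N ^ (2 * k) * (S ∩ {L | L (idxN N m) ≤ c}).ncard := by
  induction k generalizing c with
  | zero =>
    rw [Set.inter_eq_left.2 fun L hL => by simpa using hmc L hL]
    simp
  | succ k ih =>
    have hS' : S ∩ {L | L (idxN N m) ≤ c + 1} ∩ {L | L (idxN N m) ≤ c} =
        S ∩ {L | L (idxN N m) ≤ c} :=
      Set.ext fun L => ⟨fun h => ⟨h.1.1, h.2⟩,
        fun h => ⟨⟨h.1, show _ ≤ c + 1 from le_add_of_le_of_nonneg h.2 zero_le_one⟩, h.2⟩⟩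
    have hfirst := ih (c := c + 1) (fun L hL => by linarith [h0 L hL])
      (fun L hL => by linarith [hlast L hL]) (fun L hL => by push_cast at hmc ⊢; linarith [hmc L hL])
    have hsecond := ncard_le_sq_mul_ncard_inter hN hm (hS.inter_of_left _)
      (hclosed.inter (T := {L | L (idxN N m) ≤ c + 1}) fun _ _ hle h => (hle _).trans h)
      (fun L hL => hpath L hL.1) (fun L hL => h0 L hL.1) (fun L hL => hlast L hL.1)
      (fun L hL => hL.2)
    rw [hS'] at hsecond
    calc S.ncard ≤ N ^ (2 * k) * (S ∩ {L | L (idxN N m) ≤ c + 1}).ncard := hfirst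
      _ ≤ N ^ (2 * k) * (N ^ 2 * (S ∩ {L | L (idxN N m) ≤ c}).ncard) :=
          Nat.mul_le_mul_left _ hsecond
      _ = N ^ (2 * (k + 1)) * (S ∩ {L | L (idxN N m) ≤ c}).ncard := by ring

theorem ncard_le_pow_mul_ncard_inter_forall {ι : Type*} (hN : 0 < N) {m : ι → ℕ}
    (hm : ∀ j, m j ≤ N) (hS : S.Finite) (hclosed : IsLowerClosed N S)
    (hpath : ∀ L ∈ S, IsBPath N L) (K : ℕ) {b : ι → ℤ}
    (h0 : ∀ L ∈ S, ∀ j, L 0 ≤ b j - K)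
    (hlast : ∀ L ∈ S, ∀ j, L (Fin.last N) ≤ b j - K + (N - m j))
    (hb : ∀ L ∈ S, ∀ j, L (idxN N (m j)) ≤ b j) (J : Finset ι) :
    S.ncard ≤ N ^ (2 * K * J.card) *
      (S ∩ {L | ∀ j ∈ J, L (idxN N (m j)) ≤ b j - K}).ncard := by
  classical
  induction J using Finset.induction_on with
  | empty => simp
  | insert j J hj ih =>
    set SJ := S ∩ {L | ∀ j ∈ J, L (idxN N (m j)) ≤ b j - K}
    have hstep := ncard_le_pow_mul_ncard_inter (S := SJ) hN (hm j) (hS.inter_of_left _)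
      (hclosed.inter fun _ _ hle hL i hi => (hle _).trans (hL i hi))
      (fun L hL => hpath L hL.1) K (c := b j - K) (fun L hL => h0 L hL.1 j)
      (fun L hL => hlast L hL.1 j) (fun L hL => by linarith [hb L hL.1 j])
    have hSJ : SJ ∩ {L | L (idxN N (m j)) ≤ b j - K} =
        S ∩ {L | ∀ i ∈ insert j J, L (idxN N (m i)) ≤ b i - K} := by
      ext L
      simp only [SJ, Set.mem_inter_iff, Set.mem_ofPred_eq, Finset.forall_mem_insert]
      tauto
    rw [hSJ] at hstep
    calc S.ncard ≤ N ^ (2 * K * J.card) * SJ.ncard := ih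
      _ ≤ N ^ (2 * K * J.card) * (N ^ (2 * K) *
          (S ∩ {L | ∀ i ∈ insert j J, L (idxN N (m i)) ≤ b i - K}).ncard) :=
          Nat.mul_le_mul_left _ hstep
      _ = _ := by rw [Finset.card_insert_of_notMem hj]; ring

end Counting

theorem inv_le_unifProb {X : Type*} {Ω A : Set X} {M : ℕ} (hΩ : 0 < Ω.ncard)
    (h : Ω.ncard ≤ M * (Ω ∩ A).ncard) : (M : ℝ)⁻¹ ≤ unifProb Ω A := by
  rw [unifProb, le_div_iff₀ (by exact_mod_cast hΩ)]
  rcases M.eq_zero_or_pos with rfl | hM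
  · simp
  · rw [inv_mul_le_iff₀ (by exact_mod_cast hM)]
    exact_mod_cast h

theorem stmt17_general (d : ℕ) (θ u v : Fin (d+1) → ℝ)
    (hθmono : StrictMono θ) (hθlast : θ (Fin.last d) = 1)
    (N : ℕ) (hN : 2 ≤ N)
    (hfloor1 : ∀ j : Fin (d+1),
      (Nat.ceil ((N : ℝ) ^ ((3 : ℝ)/4)) : ℤ) ≤ (Nat.floor (u j * N) : ℤ))
    (hfloor2 : ∀ j : Fin d,
      (Nat.floor (v (Fin.last d) * N) : ℤ) - (Nat.floor (u j.castSucc * N) : ℤ) +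
          (Nat.ceil ((N : ℝ) ^ ((3 : ℝ)/4)) : ℤ) ≤ (N : ℤ) - (Nat.floor (θ j.castSucc * N) : ℤ))
    (lam : Fin (N+1) → ℤ) (hlam0 : lam 0 = 0)
    (hlamval : ∀ j : Fin (d+1),
      (Nat.floor (u j * N) : ℤ) ≤ lam (idxN N (Nat.floor (θ j * N))) ∧
        lam (idxN N (Nat.floor (θ j * N))) ≤ (Nat.floor (v j * N) : ℤ))
    (x y : ℤ)
    (hne : (pathSetB N x y (fun j => (lam j : WithTop ℤ)) (fun _ => ⊥)).Nonempty) :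
    unifProb (pathSetB N x y (fun j => (lam j : WithTop ℤ)) (fun _ => ⊥))
        {L | ∀ j : Fin d,
          L (idxN N (Nat.floor (θ j.castSucc * N))) ≤
            lam (idxN N (Nat.floor (θ j.castSucc * N))) -
              (Nat.ceil ((N : ℝ) ^ ((3 : ℝ)/4)) : ℤ)} ≥
      (N : ℝ) ^ (-(2 * (d : ℤ) * (Nat.ceil ((N : ℝ) ^ ((3 : ℝ)/4)) : ℤ))) := by
  set K := Nat.ceil ((N : ℝ) ^ ((3 : ℝ)/4))
  set Ω := pathSetB N x y (fun j => (lam j : WithTop ℤ)) (fun _ => ⊥)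
  have hbarrier : ∀ L ∈ Ω, ∀ i, L i ≤ lam i := fun L hL i => WithTop.coe_le_coe.1 (hL.2.2.2.1 i)
  have hm : ∀ j : Fin d, Nat.floor (θ j.castSucc * N) ≤ N := fun j =>
    Nat.floor_le_of_le (mul_le_of_le_one_left N.cast_nonneg
      (hθlast ▸ (hθmono (Fin.castSucc_lt_last j)).le))
  have hlast : idxN N (Nat.floor (θ (Fin.last d) * N)) = Fin.last N := by
    rw [hθlast, one_mul, Nat.floor_natCast, idxN_self]
  have hcount := ncard_le_pow_mul_ncard_inter_forall (by omega) hm (pathSetB_finite _ _ _ _ _)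
    (isLowerClosed_pathSetB _ _ _ _) (fun L hL => hL.1) K
    (b := fun j => lam (idxN N (Nat.floor (θ j.castSucc * N))))
    (fun L hL j => by linarith [hbarrier L hL 0, hfloor1 j.castSucc, (hlamval j.castSucc).1])
    (fun L hL j => by
      linarith [hbarrier L hL (Fin.last N), hlast ▸ (hlamval (Fin.last d)).2, hfloor2 j,
        (hlamval j.castSucc).1])
    (fun L hL j => hbarrier L hL _) Finset.univ
  simp only [Finset.mem_univ, true_implies, Finset.card_univ, Fintype.card_fin] at hcount
  rw [ge_iff_le, zpow_neg, show 2 * (d : ℤ) * K = ((2 * K * d : ℕ) : ℤ) by push_cast; ring,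
    zpow_natCast, ← Nat.cast_pow]
  exact inv_le_unifProb ((Set.ncard_pos (pathSetB_finite _ _ _ _ _)).2 hne) hcount

/-- Step 1 of the proof of Proposition 3.9: conditioned on an upper barrier path `λ₁` pinned
in windows `[⌊u_j N⌋, ⌊v_j N⌋]` at the locations `⌊θ_j N⌋`, a Bernoulli random walk bridge
lies at least `⌈N^{3/4}⌉` below `λ₁` at `⌊θ_j N⌋` for `j = 1,…,d`, with probability at least
`N^{-2d⌈N^{3/4}⌉}`. -/
theorem stmt17 (d : ℕ) (hd : 1 ≤ d) (θ u v : Fin (d+1) → ℝ)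
    (hθ0 : 0 < θ 0) (hθmono : StrictMono θ) (hθlast : θ (Fin.last d) = 1)
    (hu0 : ∀ j, 0 < u j) (huv : ∀ j, u j < v j)
    (N : ℕ) (hN : 2 ≤ N)
    (hfloor1 : ∀ j : Fin (d+1),
      (Nat.ceil ((N : ℝ) ^ ((3 : ℝ)/4)) : ℤ) ≤ (Nat.floor (u j * N) : ℤ))
    (hfloor2 : ∀ j : Fin d,
      (Nat.floor (v (Fin.last d) * N) : ℤ) - (Nat.floor (u j.castSucc * N) : ℤ) +
          (Nat.ceil ((N : ℝ) ^ ((3 : ℝ)/4)) : ℤ) ≤ (N : ℤ) - (Nat.floor (θ j.castSucc * N) : ℤ))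
    (lam : Fin (N+1) → ℤ) (hlam : IsBPath N lam) (hlam0 : lam 0 = 0)
    (hlamval : ∀ j : Fin (d+1),
      (Nat.floor (u j * N) : ℤ) ≤ lam (idxN N (Nat.floor (θ j * N))) ∧
        lam (idxN N (Nat.floor (θ j * N))) ≤ (Nat.floor (v j * N) : ℤ))
    (x y : ℤ)
    (hne : (pathSetB N x y (fun j => (lam j : WithTop ℤ)) (fun _ => ⊥)).Nonempty) :
    unifProb (pathSetB N x y (fun j => (lam j : WithTop ℤ)) (fun _ => ⊥))
        {L | ∀ j : Fin d,
          L (idxN N (Nat.floor (θ j.castSucc * N))) ≤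
            lam (idxN N (Nat.floor (θ j.castSucc * N))) -
              (Nat.ceil ((N : ℝ) ^ ((3 : ℝ)/4)) : ℤ)} ≥
      (N : ℝ) ^ (-(2 * (d : ℤ) * (Nat.ceil ((N : ℝ) ^ ((3 : ℝ)/4)) : ℤ))) :=
  stmt17_general d θ u v hθmono hθlast N hN hfloor1 hfloor2 lam hlam0 hlamval x y hne
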